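/- arXiv:1912.08575 — 2 statements merged into one kernel-verified Lean document; each statement's English description precedes it below -/
import Mathlib

section
/- Define the binary Shannon entropy H₂(x) = −x·log₂x − (1−x)·log₂(1−x), with the convention 0·log₂0 = 0, and let f(p) = 1 − p² + H₂(p²) − 2·H₂(p). Then: (i) f(p) > 0 for all p ∈ (0, 0.128); (ii) f(p) < 0 for all p ∈ (0.129, 1); and (iii) there exists p₀ ∈ [0.128, 0.129] with f(p₀) = 0. Consequently, the quantum-switch lower bound Q_QS^LB(p,p) = p² + max{0, f(p)} equals p² for p ∈ [0.129, 1] and equals 1 + H₂(p²) − 2·H₂(p) for p ∈ (0, 0.128]. -/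
/-- The binary Shannon entropy `H₂(x) = −x·log₂x − (1−x)·log₂(1−x)`,
with the convention `0·log₂0 = 0` (automatic since `Real.logb 2 0 = 0`). -/
noncomputable def H2 (x : ℝ) : ℝ := -(x * Real.logb 2 x) - (1 - x) * Real.logb 2 (1 - x)

/-- `f(p) = 1 − p² + H₂(p²) − 2·H₂(p)`. -/
noncomputable def f (p : ℝ) : ℝ := 1 - p ^ 2 + H2 (p ^ 2) - 2 * H2 p

/-- The lower bound `Q_QS^LB(p,q)` on the quantum-switch capacity (Proposition 1). -/
noncomputable def QSLB (p q : ℝ) : ℝ :=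
  p * q + max 0 (1 - p * q + H2 (p * q) - H2 p - H2 q)

/-!
In nats, `f p · log 2 = (1 - p) · g p` with
`g p = (1 + p) log 2 + 2 p log p + (1 - p) log (1 - p) - (1 + p) log (1 + p)`.
Since `g' p = log (2p² / (1 - p²))`, `g` decreases on `(0, 1/√3]` and increases on `[1/√3, 1]`
up to `g 1 = 0`, so it has a single sign change in `(0, 1)`. Writing `0.128 = 1.024 / 8` and
`0.129 = 1.032 / 8`, fifth-order Taylor bounds for `log (1 + x)` together with the known digits
of `log 2` give `g 0.128 > 0 > g 0.129`.
-/

open Real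

lemma abs_log_one_add_sub_taylor_le {x : ℝ} (hx : |x| < 1) :
    |log (1 + x) - (x - x ^ 2 / 2 + x ^ 3 / 3 - x ^ 4 / 4 + x ^ 5 / 5)| ≤ |x| ^ 6 / (1 - |x|) := by
  have h := abs_log_sub_add_sum_range_le (x := -x) (by rwa [abs_neg]) 5
  rw [abs_neg, sub_neg_eq_add] at h
  convert h using 2
  simp only [Finset.sum_range_succ, Finset.sum_range_zero]
  ring

lemma H2_eq_binEntropy_div (x : ℝ) : H2 x = binEntropy x / log 2 := by
  simp only [H2, binEntropy, logb, log_inv]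
  ring

@[fun_prop]
lemma continuous_H2 : Continuous H2 := by
  simp only [funext H2_eq_binEntropy_div]
  fun_prop

lemma continuous_f : Continuous f := by
  unfold f
  fun_prop

noncomputable def g (p : ℝ) : ℝ :=
  (1 + p) * log 2 + 2 * (p * log p) + (1 - p) * log (1 - p) - (1 + p) * log (1 + p)

lemma f_eq_mul_g_div_log_two {p : ℝ} (h0 : 0 < p) (h1 : p < 1) :
    f p = (1 - p) * g p / log 2 := by
  have hsq : log (p ^ 2) = 2 * log p := by simp [log_pow]
  have hfac : log (1 - p ^ 2) = log (1 - p) + log (1 + p) := by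
    rw [← log_mul (by linarith) (by linarith)]; ring_nf
  simp only [f, H2, g, logb, hsq, hfac]
  field_simp
  ring

lemma hasDerivAt_g {p : ℝ} (h0 : 0 < p) (h1 : p < 1) :
    HasDerivAt g (log (2 * p ^ 2) - log (1 - p ^ 2)) p := by
  have hsub := (hasDerivAt_mul_log (x := 1 - p) (by linarith)).comp p ((hasDerivAt_id p).const_sub 1)
  have hadd := (hasDerivAt_mul_log (x := 1 + p) (by linarith)).comp p ((hasDerivAt_id p).const_add 1)
  have h := (((((hasDerivAt_id p).const_add 1).mul_const (log 2)).add
    ((hasDerivAt_mul_log h0.ne').const_mul 2)).add hsub).sub hadd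
  refine h.congr_deriv ?_
  rw [log_mul (by norm_num) (by positivity), log_pow,
    show 1 - p ^ 2 = (1 - p) * (1 + p) by ring, log_mul (by linarith) (by linarith)]
  push_cast
  ring

lemma continuous_g : Continuous g := by
  have hsub := continuous_mul_log.comp (continuous_sub_left (1 : ℝ))
  have hadd := continuous_mul_log.comp (continuous_const_add (1 : ℝ))
  have := continuous_mul_log
  unfold g
  fun_prop

lemma sqrt_one_third_lt_one : √(1 / 3) < 1 := by
  rw [sqrt_lt' one_pos]; norm_num

lemma g_strictAntiOn : StrictAntiOn g (Set.Ioc 0 √(1 / 3)) := by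
  refine strictAntiOn_of_deriv_neg (convex_Ioc _ _) continuous_g.continuousOn fun p hp => ?_
  rw [interior_Ioc] at hp
  obtain ⟨h0, hs⟩ := hp
  have hsq : p ^ 2 < 1 / 3 := (lt_sqrt h0.le).1 hs
  rw [(hasDerivAt_g h0 (hs.trans sqrt_one_third_lt_one)).deriv, sub_neg]
  exact log_lt_log (by positivity) (by linarith)

lemma g_strictMonoOn : StrictMonoOn g (Set.Icc √(1 / 3) 1) := by
  refine strictMonoOn_of_deriv_pos (convex_Icc _ _) continuous_g.continuousOn fun p hp => ?_
  rw [interior_Icc] at hp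
  obtain ⟨hs, h1⟩ := hp
  have h0 : 0 < p := (sqrt_nonneg _).trans_lt hs
  have hsq : 1 / 3 < p ^ 2 := (sqrt_lt' h0).1 hs
  rw [(hasDerivAt_g h0 h1).deriv, sub_pos]
  exact log_lt_log (by nlinarith) (by linarith)

lemma g_one : g 1 = 0 := by
  norm_num [g]

lemma log_div_eight {d : ℝ} (hd : -1 < d) : log ((1 + d) / 8) = log (1 + d) - 3 * log 2 := by
  rw [log_div (by linarith) (by norm_num), show (8 : ℝ) = 2 ^ 3 by norm_num, log_pow]
  norm_num

lemma g_at_0_128_pos : 0 < g 0.128 := by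
  have ha := abs_le.1 (abs_log_one_add_sub_taylor_le (x := 0.024) (by norm_num [abs_of_pos]))
  have hb := abs_le.1 (abs_log_one_add_sub_taylor_le (x := -0.128) (by norm_num [abs_of_pos]))
  have hc := abs_le.1 (abs_log_one_add_sub_taylor_le (x := 0.128) (by norm_num [abs_of_pos]))
  have h2 := log_two_gt_d9
  rw [g, show (0.128 : ℝ) = (1 + 0.024) / 8 by norm_num, log_div_eight (by norm_num)]
  norm_num [abs_of_pos] at ha hb hc ⊢
  linarith

lemma g_at_0_129_neg : g 0.129 < 0 := by
  have ha := abs_le.1 (abs_log_one_add_sub_taylor_le (x := 0.032) (by norm_num [abs_of_pos]))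
  have hb := abs_le.1 (abs_log_one_add_sub_taylor_le (x := -0.129) (by norm_num [abs_of_pos]))
  have hc := abs_le.1 (abs_log_one_add_sub_taylor_le (x := 0.129) (by norm_num [abs_of_pos]))
  have h2 := log_two_lt_d9
  rw [g, show (0.129 : ℝ) = (1 + 0.032) / 8 by norm_num, log_div_eight (by norm_num)]
  norm_num [abs_of_pos] at ha hb hc ⊢
  linarith

lemma g_pos_of_le {p : ℝ} (h0 : 0 < p) (h : p ≤ 0.128) : 0 < g p := by
  have hs : (0.128 : ℝ) ≤ √(1 / 3) := by
    rw [le_sqrt (by norm_num) (by norm_num)]; norm_num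
  exact g_at_0_128_pos.trans_le (g_strictAntiOn.antitoneOn ⟨h0, h.trans hs⟩ ⟨by norm_num, hs⟩ h)

lemma g_neg_of_le {p : ℝ} (h : 0.129 ≤ p) (h1 : p < 1) : g p < 0 := by
  rcases le_total p √(1 / 3) with hs | hs
  · have hs' : (0.129 : ℝ) ≤ √(1 / 3) := h.trans hs
    exact (g_strictAntiOn.antitoneOn ⟨by norm_num, hs'⟩ ⟨by linarith, hs⟩ h).trans_lt g_at_0_129_neg
  · exact g_one ▸ g_strictMonoOn ⟨hs, h1.le⟩ ⟨sqrt_one_third_lt_one.le, le_rfl⟩ h1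

lemma f_pos_of_le {p : ℝ} (h0 : 0 < p) (h : p ≤ 0.128) : 0 < f p := by
  rw [f_eq_mul_g_div_log_two h0 (by linarith)]
  exact div_pos (mul_pos (by linarith) (g_pos_of_le h0 h)) (log_pos one_lt_two)

lemma f_neg_of_le {p : ℝ} (h : 0.129 ≤ p) (h1 : p < 1) : f p < 0 := by
  rw [f_eq_mul_g_div_log_two (by linarith) h1]
  exact div_neg_of_neg_of_pos (mul_neg_of_pos_of_neg (by linarith) (g_neg_of_le h h1))
    (log_pos one_lt_two)

lemma f_one : f 1 = 0 := by
  norm_num [f, H2]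

lemma QSLB_self (p : ℝ) : QSLB p p = p ^ 2 + max 0 (f p) := by
  simp only [QSLB, f]
  ring_nf

theorem corollary1_threshold :
    (∀ p ∈ Set.Ioo (0:ℝ) 0.128, 0 < f p) ∧
    (∀ p ∈ Set.Ioo (0.129:ℝ) 1, f p < 0) ∧
    (∃ p₀ ∈ Set.Icc (0.128:ℝ) 0.129, f p₀ = 0) ∧
    (∀ p ∈ Set.Icc (0.129:ℝ) 1, QSLB p p = p ^ 2) ∧
    (∀ p ∈ Set.Ioc (0:ℝ) 0.128, QSLB p p = 1 + H2 (p ^ 2) - 2 * H2 p) := by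
  refine ⟨fun p hp => f_pos_of_le hp.1 hp.2.le, fun p hp => f_neg_of_le hp.1.le hp.2,
    ?_, fun p hp => ?_, fun p hp => ?_⟩
  · exact intermediate_value_Icc' (by norm_num) continuous_f.continuousOn
      ⟨(f_neg_of_le le_rfl (by norm_num)).le, (f_pos_of_le (by norm_num) le_rfl).le⟩
  · have hf : f p ≤ 0 := by
      rcases hp.2.lt_or_eq with h1 | rfl
      · exact (f_neg_of_le hp.1 h1).le
      · exact f_one.le
    rw [QSLB_self, max_eq_left hf, add_zero]
  · rw [QSLB_self, max_eq_right (f_pos_of_le hp.1 hp.2).le, f]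
    ring
end

section
/- Define the binary Shannon entropy H₂(x) = −x·log₂x − (1−x)·log₂(1−x), with the convention 0·log₂0 = 0. For every q ∈ (0,1]: the classical-trajectory upper bound satisfies Q_C^UB(1/2, q) = 1 − max{H₂(1/2), H₂(q)} = 0, while the quantum-switch lower bound satisfies Q_QS^LB(1/2, q) = q/2 + max{0, 1 − q/2 + H₂(q/2) − H₂(1/2) − H₂(q)} ≥ q/2 > 0. -/
lemma H2_eq_binEntropy_div_log_two (x : ℝ) : H2 x = Real.binEntropy x / Real.log 2 := by
  unfold H2 Real.binEntropy Real.logb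
  rw [Real.log_inv, Real.log_inv]
  ring

lemma H2_half : H2 (1 / 2) = 1 := by
  rw [H2_eq_binEntropy_div_log_two, one_div, Real.binEntropy_two_inv,
    div_self (Real.log_pos one_lt_two).ne']

lemma H2_le_one (x : ℝ) : H2 x ≤ 1 := by
  rw [H2_eq_binEntropy_div_log_two, div_le_one (Real.log_pos one_lt_two)]
  exact Real.binEntropy_le_log_two

theorem switch_advantage_at_p_half (q : ℝ) (hq : q ∈ Set.Ioc (0:ℝ) 1) :
    (1 - max (H2 (1 / 2)) (H2 q) = 0) ∧
    (q / 2 + max 0 (1 - q / 2 + H2 (q / 2) - H2 (1 / 2) - H2 q) ≥ q / 2) ∧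
    q / 2 > 0 := by
  refine ⟨?_, le_add_of_nonneg_right (le_max_left _ _), half_pos hq.1⟩
  rw [H2_half, max_eq_left (H2_le_one q), sub_self]
end
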